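/- (Identifiability of the exponential tilting model.) Suppose (i) g(x) ∈ (0,1) for all x in the support; (ii) there exist d+1 distinct points t_1, …, t_{d+1} in the support of x1 such that for each k the map x2 ↦ g(t_k, x2) is non-constant, and the matrix with columns (1, t_kᵀ)ᵀ has full rank. If two parameter vectors (α0, β0, α1, β1) and (α0*, β0*, α1*, β1*) satisfy exp(α0 + β0ᵀx1)(1 − g(x)) + exp(α1 + β1ᵀx1)g(x) = exp(α0* + β0*ᵀx1)(1 − g(x)) + exp(α1* + β1*ᵀx1)g(x) for all x in the support, then (α0, β0, α1, β1) = (α0*, β0*, α1*, β1*). -/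
import Mathlib

lemma stmt8_aux {d : ℕ} (t : Fin (d + 1) → Fin d → ℝ)
    (hM : IsUnit
      (Matrix.of (fun i k => (Fin.cons (1 : ℝ) (t k) : Fin (d + 1) → ℝ) i) :
        Matrix (Fin (d + 1)) (Fin (d + 1)) ℝ).det)
    (c : ℝ) (v : Fin d → ℝ)
    (h : ∀ k, c + ∑ j, v j * t k j = 0) : c = 0 ∧ v = 0 := by
  set M : Matrix (Fin (d + 1)) (Fin (d + 1)) ℝ :=
    Matrix.of (fun i k => (Fin.cons (1 : ℝ) (t k) : Fin (d + 1) → ℝ) i) with hMdef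
  have hu : Matrix.vecMul (Fin.cons c v) M = 0 := by
    funext k
    have := h k
    simp only [Matrix.vecMul, dotProduct, hMdef, Matrix.of_apply,
      Fin.sum_univ_succ, Fin.cons_zero, Fin.cons_succ, Pi.zero_apply]
    linarith [this]
  have key : (Fin.cons c v : Fin (d + 1) → ℝ) = 0 := by
    have h1 : Matrix.vecMul (Matrix.vecMul (Fin.cons c v) M) M⁻¹ = 0 := by
      rw [hu]; simp [Matrix.zero_vecMul]
    rwa [Matrix.vecMul_vecMul, Matrix.mul_nonsing_inv M hM, Matrix.vecMul_one] at h1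
  constructor
  · have := congrFun key 0
    simpa using this
  · funext j
    have := congrFun key j.succ
    simpa using this

/-- Identifiability of the exponential tilting model under the instrumental
variable conditions (C1) and (C2). -/
theorem stmt8 {d m : ℕ} (S1 : Set (Fin d → ℝ)) (S2 : Set (Fin m → ℝ))
    (g : (Fin d → ℝ) → (Fin m → ℝ) → ℝ)
    (α0 α1 α0' α1' : ℝ) (β0 β1 β0' β1' : Fin d → ℝ)
    (hg : ∀ x1 ∈ S1, ∀ x2 ∈ S2, 0 < g x1 x2 ∧ g x1 x2 < 1)
    (t : Fin (d + 1) → Fin d → ℝ)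
    (ht_mem : ∀ k, t k ∈ S1)
    (ht_inj : Function.Injective t)
    (ht_nonconst : ∀ k, ∃ x2 ∈ S2, ∃ x2' ∈ S2, g (t k) x2 ≠ g (t k) x2')
    (hM : IsUnit
      (Matrix.of (fun i k => (Fin.cons (1 : ℝ) (t k) : Fin (d + 1) → ℝ) i) :
        Matrix (Fin (d + 1)) (Fin (d + 1)) ℝ).det)
    (heq : ∀ x1 ∈ S1, ∀ x2 ∈ S2,
      Real.exp (α0 + ∑ i, β0 i * x1 i) * (1 - g x1 x2)
        + Real.exp (α1 + ∑ i, β1 i * x1 i) * g x1 x2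
      = Real.exp (α0' + ∑ i, β0' i * x1 i) * (1 - g x1 x2)
        + Real.exp (α1' + ∑ i, β1' i * x1 i) * g x1 x2) :
    α0 = α0' ∧ β0 = β0' ∧ α1 = α1' ∧ β1 = β1' := by
  -- Step 1: at each t k, both exponentials agree.
  have hk : ∀ k, (α0 + ∑ i, β0 i * t k i = α0' + ∑ i, β0' i * t k i) ∧
      (α1 + ∑ i, β1 i * t k i = α1' + ∑ i, β1' i * t k i) := by
    intro k
    obtain ⟨x2, hx2, x2', hx2', hne⟩ := ht_nonconst k
    set A := Real.exp (α0 + ∑ i, β0 i * t k i) with hA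
    set B := Real.exp (α1 + ∑ i, β1 i * t k i) with hB
    set A' := Real.exp (α0' + ∑ i, β0' i * t k i) with hA'
    set B' := Real.exp (α1' + ∑ i, β1' i * t k i) with hB'
    have e1 := heq (t k) (ht_mem k) x2 hx2
    have e2 := heq (t k) (ht_mem k) x2' hx2'
    rw [← hA, ← hB, ← hA', ← hB'] at e1 e2
    set g1 := g (t k) x2
    set g2 := g (t k) x2'
    have hfac : ((B - B') - (A - A')) * (g1 - g2) = 0 := by linear_combination e1 - e2
    have hg12 : g1 - g2 ≠ 0 := sub_ne_zero.mpr hne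
    have hEq : (B - B') = (A - A') := by
      rcases mul_eq_zero.mp hfac with h | h
      · linarith [h]
      · exact absurd h hg12
    have hA0 : A = A' := by linear_combination e1 - g1 * hEq
    have hB0 : B = B' := by linarith [hEq, hA0]
    exact ⟨Real.exp_injective hA0, Real.exp_injective hB0⟩
  have h0 := stmt8_aux t hM (α0 - α0') (fun j => β0 j - β0' j) (by
    intro k
    have := (hk k).1
    have hsum : ∑ j, (β0 j - β0' j) * t k j = (∑ i, β0 i * t k i) - ∑ i, β0' i * t k i := by
      rw [← Finset.sum_sub_distrib]; congr 1; funext j; ring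
    rw [hsum]; linarith)
  have h1 := stmt8_aux t hM (α1 - α1') (fun j => β1 j - β1' j) (by
    intro k
    have := (hk k).2
    have hsum : ∑ j, (β1 j - β1' j) * t k j = (∑ i, β1 i * t k i) - ∑ i, β1' i * t k i := by
      rw [← Finset.sum_sub_distrib]; congr 1; funext j; ring
    rw [hsum]; linarith)
  refine ⟨by linarith [h0.1], funext fun j => ?_, by linarith [h1.1], funext fun j => ?_⟩
  · have := congrFun h0.2 j; simpa [sub_eq_zero] using this
  · have := congrFun h1.2 j; simpa [sub_eq_zero] using this
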